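/- Let k, p be positive integers, F analytic at 0, and define (J₃F)(x) = (−1)^{p+k−1} F(−x) and (J₄F)(x) = −F(x). With φ_G(x; ε, η) as in the preceding statement, the function y₃(x) = −φ_{J₃F}(−x; ε, η), defined for x ∈ [−η, 0], and the function y₄(x) = −φ_{J₄F}(x; ε, η), defined for x ∈ [0, η], are both solutions of d(y²)/dx = −2k x^{2k−1} A_F(εx) − ε^{p} y x^{p+k−1} B_F(εx); moreover y₃(−η) = 0, y₄(η) = 0, y₃(x) = −(η^{2k}−x^{2k})^{1/2} + O(ε) and y₄(x) = −(η^{2k}−x^{2k})^{1/2} + O(ε). -/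

import Mathlib

/-- `A_G(z) = 1 + z^(2p) G(z)²`. -/
noncomputable def AfunR (p : ℕ) (G : ℝ → ℝ) (z : ℝ) : ℝ :=
  1 + z ^ (2 * p) * (G z) ^ 2

/-- `B_G(z) = 2 z G′(z) + 2(p+2k) G(z)`. -/
noncomputable def BfunR (k p : ℕ) (G : ℝ → ℝ) (z : ℝ) : ℝ :=
  2 * z * deriv G z + 2 * ((p : ℝ) + 2 * k) * G z

/-- `(J₃G)(x) = (−1)^(p+k−1) G(−x)`. -/
noncomputable def J3 (k p : ℕ) (G : ℝ → ℝ) : ℝ → ℝ :=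
  fun x => (-1 : ℝ) ^ (p + k - 1) * G (-x)

/-- `(J₄G)(x) = −G(x)`. -/
noncomputable def J4 (G : ℝ → ℝ) : ℝ → ℝ := fun x => -G x

/-- `φ` is the family of "first quadrant" solutions for the vector field
built from `G`. -/
def SolFam (k p : ℕ) (G : ℝ → ℝ) (ε₀ η₀ : ℝ) (φ : ℝ → ℝ → ℝ → ℝ) : Prop :=
  ∀ ε η : ℝ, |ε| < ε₀ → η ∈ Set.Ioo (1 - η₀) (1 + η₀) →
    φ η ε η = 0 ∧
    (∀ x ∈ Set.Icc (0:ℝ) η, 0 ≤ φ x ε η) ∧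
    (ε = 0 → ∀ x ∈ Set.Ico (0:ℝ) η, 0 < φ x ε η) ∧
    (∀ x ∈ Set.Icc (0:ℝ) η,
      HasDerivWithinAt (fun t => (φ t ε η) ^ 2)
        (-2 * k * x ^ (2 * k - 1) * AfunR p G (ε * x)
          - ε ^ p * φ x ε η * x ^ (p + k - 1) * BfunR k p G (ε * x))
        (Set.Icc 0 η) x)

/-!
The substitutions `x ↦ -x, y ↦ -y` (for `J₃`) and `y ↦ -y` (for `J₄`) carry the vector
field built from `J₃F`, resp. `J₄F`, to the one built from `F`, since `A_{J₃F}(z) = A_F(-z)`,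
`B_{J₃F}(z) = (-1)^(p+k-1) B_F(-z)`, `A_{J₄F} = A_F` and `B_{J₄F} = -B_F`.

For the estimate, the right-hand side is `-2k x^(2k-1) + O(ε (1 + |y|))`, uniformly in `G` with
`G` and `G'` bounded near `0`. At a maximum point of `φ` this gives `φ² ≤ 2L(1 + φ)`, hence an
a priori bound on `φ`, and then the mean value theorem gives
`|φ² - (η^(2k) - x^(2k))| ≤ Cε(η - x)`. Since `η^(2k) - x^(2k) ≥ c(η - x)`, taking square roots
via `|√a - √b| ≤ |a - b| / √b` keeps the error `O(ε)`.
-/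

open Set Real

noncomputable def odeRhs (k p : ℕ) (G : ℝ → ℝ) (ε x y : ℝ) : ℝ :=
  -2 * k * x ^ (2 * k - 1) * AfunR p G (ε * x)
    - ε ^ p * y * x ^ (p + k - 1) * BfunR k p G (ε * x)

section Symmetry

variable {k p : ℕ} {F : ℝ → ℝ}

lemma AfunR_J3 (z : ℝ) : AfunR p (J3 k p F) z = AfunR p F (-z) := by
  simp [AfunR, J3, mul_pow, ← pow_mul, Even.neg_pow (even_two_mul p)]

lemma deriv_J3 (z : ℝ) : deriv (J3 k p F) z = (-1) ^ (p + k - 1) * -deriv F (-z) := by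
  unfold J3
  rw [deriv_const_mul_field, deriv_comp_neg]

lemma BfunR_J3 (z : ℝ) : BfunR k p (J3 k p F) z = (-1) ^ (p + k - 1) * BfunR k p F (-z) := by
  simp only [BfunR, J3, deriv_J3]
  ring

lemma AfunR_J4 (z : ℝ) : AfunR p (J4 F) z = AfunR p F z := by
  simp [AfunR, J4]

lemma deriv_J4 (z : ℝ) : deriv (J4 F) z = -deriv F z :=
  deriv.neg

lemma BfunR_J4 (z : ℝ) : BfunR k p (J4 F) z = -BfunR k p F z := by
  simp only [BfunR, J4, deriv_J4]
  ring

lemma odeRhs_J3 (hk : 1 ≤ k) (ε x y : ℝ) :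
    odeRhs k p (J3 k p F) ε (-x) y = -odeRhs k p F ε x (-y) := by
  have hodd : (-x) ^ (2 * k - 1) = -x ^ (2 * k - 1) := Odd.neg_pow ⟨k - 1, by omega⟩ x
  have hsq : ((-1 : ℝ) ^ (p + k - 1)) ^ 2 = 1 := by simp [← pow_mul]
  simp only [odeRhs, mul_neg, AfunR_J3, BfunR_J3, neg_neg, hodd, neg_pow x (p + k - 1)]
  linear_combination (-(ε ^ p * y * x ^ (p + k - 1) * BfunR k p F (ε * x))) * hsq

lemma odeRhs_J4 (ε x y : ℝ) : odeRhs k p (J4 F) ε x y = odeRhs k p F ε x (-y) := by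
  simp only [odeRhs, AfunR_J4, BfunR_J4]
  ring

variable {φ : ℝ → ℝ} {ε η : ℝ}

lemma hasDerivWithinAt_sq_J3 (hk : 1 ≤ k)
    (hφ : ∀ x ∈ Icc 0 η,
      HasDerivWithinAt (fun t => φ t ^ 2) (odeRhs k p (J3 k p F) ε x (φ x)) (Icc 0 η) x) :
    ∀ x ∈ Icc (-η) 0, HasDerivWithinAt (fun t => (-φ (-t)) ^ 2)
      (odeRhs k p F ε x (-φ (-x))) (Icc (-η) 0) x := by
  intro x hx
  have hmaps : MapsTo Neg.neg (Icc (-η) 0) (Icc 0 η) := fun t ht =>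
    ⟨neg_nonneg.2 ht.2, neg_le.1 ht.1⟩
  have h := (hφ (-x) (hmaps hx)).comp x (hasDerivAt_neg x).hasDerivWithinAt hmaps
  simp only [neg_sq]
  refine h.congr_deriv ?_
  rw [odeRhs_J3 hk]
  ring

lemma hasDerivWithinAt_sq_J4
    (hφ : ∀ x ∈ Icc 0 η,
      HasDerivWithinAt (fun t => φ t ^ 2) (odeRhs k p (J4 F) ε x (φ x)) (Icc 0 η) x) :
    ∀ x ∈ Icc 0 η, HasDerivWithinAt (fun t => (-φ t) ^ 2)
      (odeRhs k p F ε x (-φ x)) (Icc 0 η) x := by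
  intro x hx
  simpa only [neg_sq, odeRhs_J4] using hφ x hx

lemma abs_J3_le_and_abs_deriv_J3_le {r M : ℝ}
    (hF : ∀ z, |z| < r → |F z| ≤ M ∧ |deriv F z| ≤ M) :
    ∀ z, |z| < r → |J3 k p F z| ≤ M ∧ |deriv (J3 k p F) z| ≤ M := fun z hz => by
  simpa [J3, deriv_J3, abs_mul] using hF (-z) (by rwa [abs_neg])

lemma abs_J4_le_and_abs_deriv_J4_le {r M : ℝ}
    (hF : ∀ z, |z| < r → |F z| ≤ M ∧ |deriv F z| ≤ M) :
    ∀ z, |z| < r → |J4 F z| ≤ M ∧ |deriv (J4 F) z| ≤ M := fun z hz => by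
  simpa [J4, deriv_J4] using hF z hz

end Symmetry

section RealAnalysis

variable {φ f : ℝ → ℝ} {η : ℝ}

lemma le_of_abs_hasDerivWithinAt_sq_le {L : ℝ} (hη : η ≤ 2)
    (hφ0 : ∀ x ∈ Icc 0 η, 0 ≤ φ x) (hφη : φ η = 0)
    (hφ : ∀ x ∈ Icc 0 η, HasDerivWithinAt (fun t => φ t ^ 2) (f x) (Icc 0 η) x)
    (hf : ∀ x ∈ Icc 0 η, |f x| ≤ L * (1 + φ x)) :
    ∀ x ∈ Icc 0 η, φ x ≤ 4 * L + 1 := by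
  intro x hx
  have hηI : η ∈ Icc 0 η := right_mem_Icc.2 (hx.1.trans hx.2)
  have hL : 0 ≤ L := by simpa [hφη] using (abs_nonneg _).trans (hf η hηI)
  have hcont : ContinuousOn φ (Icc 0 η) :=
    (ContinuousOn.sqrt fun t ht => (hφ t ht).continuousWithinAt).congr
      fun t ht => (sqrt_sq (hφ0 t ht)).symm
  obtain ⟨x₀, hx₀, hmax⟩ := isCompact_Icc.exists_isMaxOn ⟨x, hx⟩ hcont
  have hmax : ∀ t ∈ Icc 0 η, φ t ≤ φ x₀ := hmax
  have hmvt := (convex_Icc 0 η).norm_image_sub_le_of_norm_hasDerivWithin_le hφ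
    (C := L * (1 + φ x₀)) (fun t ht => (hf t ht).trans (by gcongr; exact hmax t ht)) hx₀ hηI
  simp only [hφη, norm_eq_abs, abs_of_nonneg (sub_nonneg.2 hx₀.2)] at hmvt
  have h0 := hφ0 x₀ hx₀
  have : φ x₀ ^ 2 ≤ 2 * L * (1 + φ x₀) := by
    nlinarith [abs_le.1 hmvt, mul_nonneg hL (add_nonneg zero_le_one h0), hx₀.1]
  nlinarith [hmax x hx]

lemma abs_sq_sub_pow_sub_pow_le {n : ℕ} {B : ℝ} (hφη : φ η = 0)
    (hφ : ∀ x ∈ Icc 0 η, HasDerivWithinAt (fun t => φ t ^ 2) (f x) (Icc 0 η) x)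
    (hf : ∀ x ∈ Icc 0 η, |f x + n * x ^ (n - 1)| ≤ B) :
    ∀ x ∈ Icc 0 η, |φ x ^ 2 - (η ^ n - x ^ n)| ≤ B * (η - x) := by
  intro x hx
  have hderiv : ∀ t ∈ Icc 0 η, HasDerivWithinAt (fun s => φ s ^ 2 - (η ^ n - s ^ n))
      (f t + n * t ^ (n - 1)) (Icc 0 η) t := fun t ht =>
    ((hφ t ht).sub ((hasDerivAt_pow n t).const_sub (η ^ n)).hasDerivWithinAt).congr_deriv
      (sub_neg_eq_add _ _)
  have h := (convex_Icc 0 η).norm_image_sub_le_of_norm_hasDerivWithin_le hderiv hf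
    (right_mem_Icc.2 (hx.1.trans hx.2)) hx
  simpa [hφη, norm_eq_abs, abs_sub_comm x η, abs_of_nonneg (sub_nonneg.2 hx.2)] using h

end RealAnalysis

lemma pow_mul_sub_le_pow_sub_pow {a x η : ℝ} (ha : 0 ≤ a) (haη : a ≤ η) (hx : 0 ≤ x)
    (hxη : x ≤ η) {n : ℕ} (hn : 1 ≤ n) : a ^ (n - 1) * (η - x) ≤ η ^ n - x ^ n := by
  obtain ⟨m, rfl⟩ := Nat.exists_eq_add_of_le' hn
  have ha' := pow_le_pow_left₀ ha haη m
  have hx' := pow_le_pow_left₀ hx hxη m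
  rw [Nat.add_sub_cancel, pow_succ, pow_succ]
  nlinarith [sub_nonneg.2 hxη]

lemma abs_sqrt_sub_sqrt_le {a b c e K : ℝ} (ha : 0 ≤ a) (hc : 0 < c) (he : 0 ≤ e)
    (hb : c * e ≤ b) (hab : |a - b| ≤ K * e) : |√a - √b| ≤ K * √e / √c := by
  rcases he.eq_or_lt with rfl | he
  · have : a = b := by simpa [sub_eq_zero] using hab
    simp [this]
  have hb0 : 0 < b := (mul_pos hc he).trans_le hb
  have hsum : |√a - √b| * (√a + √b) = |a - b| := by
    have : (√a - √b) * (√a + √b) = a - b := by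
      ring_nf
      rw [sq_sqrt ha, sq_sqrt hb0.le]
    rw [← this, abs_mul, abs_of_nonneg (by positivity : 0 ≤ √a + √b)]
  have hce : √c * √e ≤ √b := by
    rw [← sqrt_mul hc.le]
    exact sqrt_le_sqrt hb
  rw [le_div_iff₀ (sqrt_pos.2 hc)]
  refine le_of_mul_le_mul_right ?_ (sqrt_pos.2 he)
  calc |√a - √b| * √c * √e ≤ |√a - √b| * (√a + √b) := by
        rw [mul_assoc]; gcongr; linarith [sqrt_nonneg a]
    _ ≤ K * (√e * √e) := by rw [hsum, mul_self_sqrt he.le]; exact hab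
    _ = K * √e * √e := by ring

section Estimates

variable {k p : ℕ} {G : ℝ → ℝ} {M : ℝ}

lemma abs_BfunR_le {z : ℝ} (hz : |z| ≤ 2) (hG : |G z| ≤ M) (hG' : |deriv G z| ≤ M) :
    |BfunR k p G z| ≤ (4 + 2 * p + 4 * k) * M := by
  have hM : 0 ≤ M := (abs_nonneg _).trans hG
  calc |BfunR k p G z| ≤ 2 * |z| * |deriv G z| + 2 * (p + 2 * k) * |G z| := by
        refine (abs_add_le _ _).trans_eq ?_
        simp only [abs_mul, abs_two, abs_of_nonneg (by positivity : (0 : ℝ) ≤ p + 2 * k)]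
    _ ≤ 2 * 2 * M + 2 * (p + 2 * k) * M := by gcongr
    _ = (4 + 2 * p + 4 * k) * M := by ring

lemma pow_le_two_pow {x : ℝ} (hx : x ∈ Icc 0 2) {m n : ℕ} (hmn : m ≤ n) : x ^ m ≤ 2 ^ n :=
  (pow_le_pow_left₀ hx.1 hx.2 m).trans (pow_le_pow_right₀ one_le_two hmn)

lemma exists_abs_odeRhs_add_le (hp : 1 ≤ p) (hM : 0 ≤ M) :
    ∃ K ≥ 0, ∀ (G : ℝ → ℝ) (ε x y : ℝ), |ε| ≤ 1 → x ∈ Icc 0 2 → |G (ε * x)| ≤ M →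
      |deriv G (ε * x)| ≤ M →
      |odeRhs k p G ε x y + 2 * k * x ^ (2 * k - 1)| ≤ K * (1 + |y|) * |ε| := by
  refine ⟨2 * k * 2 ^ (2 * k) * 4 ^ p * M ^ 2 + 2 ^ (p + k) * ((4 + 2 * p + 4 * k) * M),
    by positivity, fun G ε x y hε hx hG hG' => ?_⟩
  have hεx : |ε * x| ≤ 2 := by
    rw [abs_mul, abs_of_nonneg hx.1]
    nlinarith [abs_nonneg ε, hx.1, hx.2]
  have hεp : |ε| ^ p ≤ |ε| := pow_le_of_le_one (abs_nonneg ε) hε (by omega)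
  have hεx2p : (ε * x) ^ (2 * p) ≤ 4 ^ p * |ε| := by
    have hsq : (ε * x) ^ 2 ≤ 4 * |ε| := by
      rw [mul_pow, ← sq_abs ε]
      have : x ^ 2 ≤ 4 := by nlinarith [hx.1, hx.2]
      nlinarith [abs_nonneg ε, sq_nonneg x]
    calc (ε * x) ^ (2 * p) = ((ε * x) ^ 2) ^ p := pow_mul _ _ _
      _ ≤ (4 * |ε|) ^ p := by gcongr
      _ = 4 ^ p * |ε| ^ p := mul_pow _ _ _
      _ ≤ 4 ^ p * |ε| := by gcongr
  have hG2 : G (ε * x) ^ 2 ≤ M ^ 2 := by rw [← sq_abs]; gcongr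
  have hA : |2 * k * x ^ (2 * k - 1) * ((ε * x) ^ (2 * p) * G (ε * x) ^ 2)|
      ≤ 2 * k * 2 ^ (2 * k) * 4 ^ p * M ^ 2 * |ε| := by
    have h0 : 0 ≤ (ε * x) ^ (2 * p) * G (ε * x) ^ 2 :=
      mul_nonneg (by rw [pow_mul]; positivity) (sq_nonneg _)
    rw [abs_of_nonneg (mul_nonneg (mul_nonneg (by positivity) (pow_nonneg hx.1 _)) h0)]
    calc 2 * k * x ^ (2 * k - 1) * ((ε * x) ^ (2 * p) * G (ε * x) ^ 2)
        ≤ 2 * k * 2 ^ (2 * k) * (4 ^ p * |ε| * M ^ 2) := by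
          gcongr
          exact pow_le_two_pow hx (Nat.sub_le _ _)
      _ = 2 * k * 2 ^ (2 * k) * 4 ^ p * M ^ 2 * |ε| := by ring
  have hB : |ε ^ p * y * x ^ (p + k - 1) * BfunR k p G (ε * x)|
      ≤ 2 ^ (p + k) * ((4 + 2 * p + 4 * k) * M) * |y| * |ε| := by
    simp only [abs_mul, abs_pow, abs_of_nonneg hx.1]
    calc |ε| ^ p * |y| * x ^ (p + k - 1) * |BfunR k p G (ε * x)|
        ≤ |ε| * |y| * 2 ^ (p + k) * ((4 + 2 * p + 4 * k) * M) := by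
          gcongr
          exacts [pow_nonneg hx.1 _, pow_le_two_pow hx (Nat.sub_le _ _),
            abs_BfunR_le hεx hG hG']
      _ = _ := by ring
  have hsplit : odeRhs k p G ε x y + 2 * k * x ^ (2 * k - 1)
      = -(2 * k * x ^ (2 * k - 1) * ((ε * x) ^ (2 * p) * G (ε * x) ^ 2))
        - ε ^ p * y * x ^ (p + k - 1) * BfunR k p G (ε * x) := by
    unfold odeRhs AfunR
    ring
  rw [hsplit]
  refine (abs_sub _ _).trans ?_
  rw [abs_neg]
  have ha : 0 ≤ 2 * k * 2 ^ (2 * k) * 4 ^ p * M ^ 2 := by positivity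
  have hb : 0 ≤ 2 ^ (p + k) * ((4 + 2 * p + 4 * k) * M) := by positivity
  nlinarith [mul_nonneg (mul_nonneg ha (abs_nonneg y)) (abs_nonneg ε),
    mul_nonneg hb (abs_nonneg ε)]

lemma abs_odeRhs_le_of_abs_add_le {K ε x y : ℝ} (hK : 0 ≤ K) (hε : |ε| ≤ 1) (hx : x ∈ Icc 0 2)
    (hy : 0 ≤ y) (h : |odeRhs k p G ε x y + 2 * k * x ^ (2 * k - 1)| ≤ K * (1 + y) * |ε|) :
    |odeRhs k p G ε x y| ≤ (2 * k * 2 ^ (2 * k) + K) * (1 + y) := by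
  have hpow : |2 * k * x ^ (2 * k - 1)| ≤ 2 * k * 2 ^ (2 * k) := by
    rw [abs_of_nonneg (by have := hx.1; positivity)]
    gcongr
    exact pow_le_two_pow hx (Nat.sub_le _ _)
  calc |odeRhs k p G ε x y|
      ≤ |odeRhs k p G ε x y + 2 * k * x ^ (2 * k - 1)| + |2 * k * x ^ (2 * k - 1)| := by
        simpa only [add_sub_cancel_right] using
          abs_sub (odeRhs k p G ε x y + 2 * k * x ^ (2 * k - 1)) (2 * k * x ^ (2 * k - 1))
    _ ≤ K * (1 + y) * 1 + 2 * k * 2 ^ (2 * k) * (1 + y) := by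
        gcongr
        · exact h.trans (by gcongr)
        · exact hpow.trans (le_mul_of_one_le_right (by positivity) (by linarith))
    _ = (2 * k * 2 ^ (2 * k) + K) * (1 + y) := by ring

end Estimates

lemma AnalyticAt.exists_abs_le_and_abs_deriv_le {F : ℝ → ℝ} (hF : AnalyticAt ℝ F 0) :
    ∃ r > 0, ∃ M, ∀ z, |z| < r → |F z| ≤ M ∧ |deriv F z| ≤ M := by
  have h := (hF.continuousAt.abs.eventually_lt continuousAt_const (lt_add_one |F 0|)).and
    (hF.deriv.continuousAt.abs.eventually_lt continuousAt_const (lt_add_one |deriv F 0|))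
  obtain ⟨r, hr, hball⟩ := Metric.eventually_nhds_iff.1 h
  refine ⟨r, hr, max (|F 0| + 1) (|deriv F 0| + 1), fun z hz => ?_⟩
  have hz := hball (by rwa [Real.dist_0_eq_abs])
  exact ⟨hz.1.le.trans (le_max_left _ _), hz.2.le.trans (le_max_right _ _)⟩

theorem exists_abs_sub_sqrt_le {k p : ℕ} (hk : 1 ≤ k) (hp : 1 ≤ p) {a : ℝ} (ha : 0 < a)
    {r M : ℝ} (hM : 0 ≤ M) :
    ∃ C, ∀ (G : ℝ → ℝ) (ε η : ℝ) (φ : ℝ → ℝ),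
      (∀ z, |z| < r → |G z| ≤ M ∧ |deriv G z| ≤ M) → |ε| ≤ 1 → 2 * |ε| < r → η ∈ Icc a 2 →
      φ η = 0 → (∀ x ∈ Icc 0 η, 0 ≤ φ x) →
      (∀ x ∈ Icc 0 η,
        HasDerivWithinAt (fun t => φ t ^ 2) (odeRhs k p G ε x (φ x)) (Icc 0 η) x) →
      ∀ x ∈ Icc 0 η, |φ x - √(η ^ (2 * k) - x ^ (2 * k))| ≤ C * |ε| := by
  obtain ⟨K, hK0, hK⟩ := exists_abs_odeRhs_add_le (k := k) hp hM
  set L : ℝ := 2 * k * 2 ^ (2 * k) + K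
  set Φ : ℝ := 4 * L + 1
  refine ⟨K * (1 + Φ) * √2 / √(a ^ (2 * k - 1)), ?_⟩
  intro G ε η φ hG hε hεr hη hφη hφ0 hφ x hx
  have hIcc : ∀ t ∈ Icc 0 η, t ∈ Icc 0 2 := fun t ht => ⟨ht.1, ht.2.trans hη.2⟩
  have hGε : ∀ t ∈ Icc 0 η, |G (ε * t)| ≤ M ∧ |deriv G (ε * t)| ≤ M := fun t ht =>
    hG _ (by rw [abs_mul, abs_of_nonneg ht.1]; nlinarith [abs_nonneg ε, (hIcc t ht).2])
  have hpert : ∀ t ∈ Icc 0 η,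
      |odeRhs k p G ε t (φ t) + 2 * k * t ^ (2 * k - 1)| ≤ K * (1 + φ t) * |ε| :=
    fun t ht => by
      simpa [abs_of_nonneg (hφ0 t ht)] using
        hK G ε t (φ t) hε (hIcc t ht) (hGε t ht).1 (hGε t ht).2
  have hrhs : ∀ t ∈ Icc 0 η, |odeRhs k p G ε t (φ t)| ≤ L * (1 + φ t) := fun t ht =>
    abs_odeRhs_le_of_abs_add_le hK0 hε (hIcc t ht) (hφ0 t ht) (hpert t ht)
  have hφΦ := le_of_abs_hasDerivWithinAt_sq_le hη.2 hφ0 hφη hφ hrhs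
  have hsq := abs_sq_sub_pow_sub_pow_le (n := 2 * k) (B := K * (1 + Φ) * |ε|) hφη hφ
    (fun t ht => by
      push_cast
      exact (hpert t ht).trans (by gcongr; exact hφΦ t ht)) x hx
  have hlow : a ^ (2 * k - 1) * (η - x) ≤ η ^ (2 * k) - x ^ (2 * k) :=
    pow_mul_sub_le_pow_sub_pow ha.le hη.1 hx.1 hx.2 (by omega)
  rw [← sqrt_sq (hφ0 x hx)]
  calc |√(φ x ^ 2) - √(η ^ (2 * k) - x ^ (2 * k))|
      ≤ K * (1 + Φ) * |ε| * √(η - x) / √(a ^ (2 * k - 1)) :=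
        abs_sqrt_sub_sqrt_le (sq_nonneg _) (by positivity) (sub_nonneg.2 hx.2) hlow hsq
    _ ≤ K * (1 + Φ) * |ε| * √2 / √(a ^ (2 * k - 1)) := by
        gcongr
        linarith [hx.1, hη.2]
    _ = K * (1 + Φ) * √2 / √(a ^ (2 * k - 1)) * |ε| := by ring

/-- If `φ_{J₃F}`, `φ_{J₄F}` are the solution families for
`J₃F`, `J₄F`, then `y₃(x) = −φ_{J₃F}(−x;ε,η)` on `[−η,0]` and
`y₄(x) = −φ_{J₄F}(x;ε,η)` on `[0,η]` both solve
`d(y²)/dx = −2k x^(2k−1) A_F(εx) − ε^p y x^(p+k−1) B_F(εx)`;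
moreover `y₃(−η) = 0`, `y₄(η) = 0`, and
`y₃(x) = −(η^(2k)−x^(2k))^(1/2) + O(ε)`, `y₄(x) = −(η^(2k)−x^(2k))^(1/2) + O(ε)`. -/
theorem statement14 (k p : ℕ) (hk : 1 ≤ k) (hp : 1 ≤ p)
    (F : ℝ → ℝ) (hF : AnalyticAt ℝ F 0)
    (ε₀ η₀ : ℝ) (hε₀ : 0 < ε₀) (hη₀ : η₀ ∈ Set.Ioo (0:ℝ) 1)
    (φ₃ φ₄ : ℝ → ℝ → ℝ → ℝ)
    (hφ₃ : SolFam k p (J3 k p F) ε₀ η₀ φ₃)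
    (hφ₄ : SolFam k p (J4 F) ε₀ η₀ φ₄) :
    (∀ ε η : ℝ, |ε| < ε₀ → η ∈ Set.Ioo (1 - η₀) (1 + η₀) →
      -φ₃ (-(-η)) ε η = 0 ∧
      -φ₄ η ε η = 0 ∧
      (∀ x ∈ Set.Icc (-η) (0:ℝ),
        HasDerivWithinAt (fun t => (-φ₃ (-t) ε η) ^ 2)
          (-2 * k * x ^ (2 * k - 1) * AfunR p F (ε * x)
            - ε ^ p * (-φ₃ (-x) ε η) * x ^ (p + k - 1) * BfunR k p F (ε * x))
          (Set.Icc (-η) 0) x) ∧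
      (∀ x ∈ Set.Icc (0:ℝ) η,
        HasDerivWithinAt (fun t => (-φ₄ t ε η) ^ 2)
          (-2 * k * x ^ (2 * k - 1) * AfunR p F (ε * x)
            - ε ^ p * (-φ₄ x ε η) * x ^ (p + k - 1) * BfunR k p F (ε * x))
          (Set.Icc 0 η) x)) ∧
    (∃ C > (0:ℝ), ∃ ε' > (0:ℝ), ε' ≤ ε₀ ∧
      ∀ ε η : ℝ, |ε| < ε' → η ∈ Set.Ioo (1 - η₀) (1 + η₀) →
        (∀ x ∈ Set.Icc (-η) (0:ℝ),
          |(-φ₃ (-x) ε η) - (-Real.sqrt (η ^ (2 * k) - x ^ (2 * k)))| ≤ C * |ε|) ∧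
        (∀ x ∈ Set.Icc (0:ℝ) η,
          |(-φ₄ x ε η) - (-Real.sqrt (η ^ (2 * k) - x ^ (2 * k)))| ≤ C * |ε|)) := by
  refine ⟨fun ε η hε hη => ?_, ?_⟩
  · obtain ⟨h3η, -, -, h3⟩ := hφ₃ ε η hε hη
    obtain ⟨h4η, -, -, h4⟩ := hφ₄ ε η hε hη
    exact ⟨by simp [h3η], by simp [h4η], hasDerivWithinAt_sq_J3 hk h3,
      hasDerivWithinAt_sq_J4 h4⟩
  obtain ⟨r, hr, M, hF⟩ := hF.exists_abs_le_and_abs_deriv_le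
  have hM : 0 ≤ M := (abs_nonneg _).trans (hF 0 (by simpa using hr)).1
  obtain ⟨C, hC⟩ := exists_abs_sub_sqrt_le hk hp (sub_pos.2 hη₀.2) hM
  refine ⟨max C 1, by positivity, min (min (r / 2) 1) ε₀, by positivity, min_le_right _ _,
    fun ε η hε hη => ?_⟩
  simp only [lt_min_iff] at hε
  have hε1 : |ε| ≤ 1 := hε.1.2.le
  have hεr : 2 * |ε| < r := by linarith [hε.1.1]
  have hηI : η ∈ Icc (1 - η₀) 2 := ⟨hη.1.le, by linarith [hη.2, hη₀.2]⟩
  have hCε : C * |ε| ≤ max C 1 * |ε| := by gcongr; exact le_max_left _ _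
  obtain ⟨h3η, h3pos, -, h3⟩ := hφ₃ ε η hε.2 hη
  obtain ⟨h4η, h4pos, -, h4⟩ := hφ₄ ε η hε.2 hη
  refine ⟨fun x hx => ?_, fun x hx => ?_⟩
  · have h := hC _ ε η (φ₃ · ε η) (abs_J3_le_and_abs_deriv_J3_le hF) hε1 hεr hηI h3η h3pos h3
      (-x) ⟨neg_nonneg.2 hx.2, neg_le.1 hx.1⟩
    rw [Even.neg_pow (even_two_mul k)] at h
    rw [neg_sub_neg, abs_sub_comm]
    exact h.trans hCε
  · have h := hC _ ε η (φ₄ · ε η) (abs_J4_le_and_abs_deriv_J4_le hF) hε1 hεr hηI h4η h4pos h4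
      x hx
    rw [neg_sub_neg, abs_sub_comm]
    exact h.trans hCε
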